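/- If a sequence (β_n) of natural numbers satisfies β_2 ≤ 1 and β_n ≤ q^{n−2} + (q−1)·β_{n−1} for all n ≥ 3, then β_n ≤ q^{n−1} − (q−1)^{n−1} for all n ≥ 2. -/
import Mathlib

/-- Key induction in the optimality proof for the Gray Strategy: if `β 2 ≤ 1` and
`β n ≤ q^(n-2) + (q-1)·β (n-1)` for all `n ≥ 3`, then
`β n ≤ q^(n-1) - (q-1)^(n-1)` for all `n ≥ 2`. -/
theorem beta_recursion_bound (q : ℕ) (hq : 2 ≤ q) (β : ℕ → ℕ)
    (h2 : β 2 ≤ 1)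
    (hrec : ∀ n, 3 ≤ n → β n ≤ q ^ (n - 2) + (q - 1) * β (n - 1)) :
    ∀ n, 2 ≤ n → β n ≤ q ^ (n - 1) - (q - 1) ^ (n - 1) := by
  intro n hn
  induction n, hn using Nat.le_induction with
  | base => simpa using h2.trans (by omega)
  | succ n hn ih =>
    have hpow : (q - 1) ^ n ≤ q ^ n := Nat.pow_le_pow_left (by omega) n
    have hpow' : (q - 1) ^ (n - 1) ≤ q ^ (n - 1) := Nat.pow_le_pow_left (by omega) _
    have h1 : β (n + 1) ≤ q ^ (n - 1) + (q - 1) * β n := by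
      have := hrec (n + 1) (by omega)
      simpa using this
    have h3 : (q - 1) * β n ≤ (q - 1) * (q ^ (n - 1) - (q - 1) ^ (n - 1)) :=
      Nat.mul_le_mul_left _ ih
    have h4 : (q - 1) * (q ^ (n - 1) - (q - 1) ^ (n - 1))
        = (q - 1) * q ^ (n - 1) - (q - 1) * (q - 1) ^ (n - 1) :=
      Nat.mul_sub _ _ _
    have key : q ^ (n - 1) + ((q - 1) * q ^ (n - 1) - (q - 1) * (q - 1) ^ (n - 1))
        = q ^ n - (q - 1) ^ n := by
      have hn1 : n - 1 + 1 = n := by omega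
      have e1 : q ^ n = q * q ^ (n - 1) := by
        conv_lhs => rw [← hn1]
        rw [pow_succ, mul_comm]
      have e2 : (q - 1) ^ n = (q - 1) * (q - 1) ^ (n - 1) := by
        conv_lhs => rw [← hn1]
        rw [pow_succ, mul_comm]
      have hmle : (q - 1) * (q - 1) ^ (n - 1) ≤ (q - 1) * q ^ (n - 1) :=
        Nat.mul_le_mul_left _ hpow'
      have hq1 : q * q ^ (n - 1) = q ^ (n - 1) + (q - 1) * q ^ (n - 1) := by
        obtain ⟨k, rfl⟩ : ∃ k, q = k + 2 := ⟨q - 2, by omega⟩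
        have hk : k + 2 - 1 = k + 1 := rfl
        rw [hk]; ring
      omega
    calc β (n + 1) ≤ q ^ (n - 1) + (q - 1) * β n := h1
      _ ≤ q ^ (n - 1) + ((q - 1) * q ^ (n - 1) - (q - 1) * (q - 1) ^ (n - 1)) := by
          rw [← h4]; exact Nat.add_le_add_left h3 _
      _ = q ^ n - (q - 1) ^ n := key
      _ = q ^ (n + 1 - 1) - (q - 1) ^ (n + 1 - 1) := by simp
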